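/- Let X be n-Hausdorff, Z an n-H-closed extension of X that is Hausdorff except for X, and f : n-κX → Z a continuous surjection with f(x) = x for x ∈ X. Then P = {f⁻¹(p) : p ∈ Z∖X} is a Hausdorff partition of n-σX ∖ X into compact sets closed in n-σX, each of which is Hausdorff-separated from every point of X. -/

import Mathlib

open Set Topology Function

universe u v

/-- A space is `n`-Hausdorff if any `n` distinct points admit open neighborhoods
with empty intersection. -/
def NHausdorff (X : Type u) [TopologicalSpace X] (n : ℕ) : Prop :=
  ∀ x : Fin n → X, Function.Injective x →
    ∃ U : Fin n → Set X, (∀ i, IsOpen (U i) ∧ x i ∈ U i) ∧ (⋂ i, U i) = (∅ : Set X)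

/-- An open filter on `X`: a nonempty family of nonempty open sets closed under
finite intersections and open supersets. -/
structure IsOpenFilter {X : Type u} [TopologicalSpace X] (F : Set (Set X)) : Prop where
  nonempty : F.Nonempty
  isOpen_mem : ∀ U ∈ F, IsOpen U
  nonempty_mem : ∀ U ∈ F, U.Nonempty
  inter_mem : ∀ U ∈ F, ∀ V ∈ F, U ∩ V ∈ F
  superset_mem : ∀ U ∈ F, ∀ V : Set X, IsOpen V → U ⊆ V → V ∈ F

/-- An open ultrafilter: a maximal open filter. -/
def IsOpenUltrafilter {X : Type u} [TopologicalSpace X] (F : Set (Set X)) : Prop :=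
  IsOpenFilter F ∧ ∀ G : Set (Set X), IsOpenFilter G → F ⊆ G → G = F

/-- The adherence of a family of sets: `⋂ {cl U : U ∈ F}`. -/
def adh {X : Type u} [TopologicalSpace X] (F : Set (Set X)) : Set X :=
  ⋂ U ∈ F, closure U

/-- `X` is `n`-H-closed: `X` is `n`-Hausdorff and closed in every `n`-Hausdorff space
in which it embeds. -/
def NHClosed (X : Type u) [TopologicalSpace X] (n : ℕ) : Prop :=
  NHausdorff X n ∧
    ∀ (Z : Type u) (_ : TopologicalSpace Z) (e : X → Z),
      NHausdorff Z n → IsEmbedding e → IsClosed (Set.range e)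

lemma univ_mem_of_isOpenFilter {X : Type u} [TopologicalSpace X] {F : Set (Set X)}
    (hF : IsOpenFilter F) : Set.univ ∈ F := by
  obtain ⟨U, hU⟩ := hF.nonempty
  exact hF.superset_mem U hU Set.univ isOpen_univ (Set.subset_univ U)

/-- The non-full open ultrafilters on `X`: those with fewer than `n-1` adherent points. -/
def NonFullUlt (X : Type u) [TopologicalSpace X] (n : ℕ) : Type u :=
  {F : Set (Set X) // IsOpenUltrafilter F ∧ (adh F).encard < (n - 1 : ℕ)}

/-- The points added to `X` to form `n-κX`: for each non-full open ultrafilter `U`,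
a set of `n - 1 - |aU|` new points. -/
def KPoints (X : Type u) [TopologicalSpace X] (n : ℕ) : Type u :=
  Σ F : NonFullUlt X n, Fin (n - 1 - (adh F.val).ncard)

/-- The underlying set of the Katětov-type extension `n-κX`. -/
def nKatetov (X : Type u) [TopologicalSpace X] (n : ℕ) : Type u :=
  X ⊕ KPoints X n

/-- The topology of `n-κX`: `V` is open iff `V ∩ X` is open in `X` and each added point
`p` (associated to the ultrafilter `p.1`) in `V` satisfies `V ∩ X ∈ p.1`. -/
def nKatetovTop (X : Type u) [TopologicalSpace X] (n : ℕ) :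
    TopologicalSpace (nKatetov X n) where
  IsOpen V := IsOpen (Sum.inl ⁻¹' V : Set X) ∧
    ∀ p : KPoints X n, Sum.inr p ∈ V → Sum.inl ⁻¹' V ∈ p.1.val
  isOpen_univ := by
    refine ⟨by exact isOpen_univ, fun p _ => ?_⟩
    exact univ_mem_of_isOpenFilter p.1.property.1.1
  isOpen_inter := by
    rintro s t ⟨hs1, hs2⟩ ⟨ht1, ht2⟩
    refine ⟨by exact hs1.inter ht1, fun p hp => ?_⟩
    exact p.1.property.1.1.inter_mem _ (hs2 p hp.1) _ (ht2 p hp.2)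
  isOpen_sUnion := by
    intro S hS
    have hop : IsOpen (Sum.inl ⁻¹' ⋃₀ S : Set X) := by
      rw [show (Sum.inl ⁻¹' ⋃₀ S : Set X) = ⋃ s ∈ S, Sum.inl ⁻¹' s from Set.preimage_sUnion]
      exact isOpen_biUnion fun s hs => (hS s hs).1
    refine ⟨hop, ?_⟩
    rintro p ⟨s, hsS, hps⟩
    exact p.1.property.1.1.superset_mem _ ((hS s hsS).2 p hps) _ hop
      (fun x hx => ⟨s, hsS, hx⟩)

/-- For `U` open in `Y`, the set `o(U ∩ X) = {p ∈ Y : U ∩ X ∈ O^p}`, where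
`O^p = {V ∩ X : p ∈ V ∈ τ(Y)}`. -/
def oSet {Y : Type u} [TopologicalSpace Y] (X : Set Y) (U : Set Y) : Set Y :=
  {p | ∃ V : Set Y, IsOpen V ∧ p ∈ V ∧ V ∩ X = U ∩ X}

/-- The strict extension topology on `Y` (relative to the dense subset `X`),
with base `{oU : U open in X}`. -/
def strictTop (Y : Type u) [TopologicalSpace Y] (X : Set Y) : TopologicalSpace Y :=
  TopologicalSpace.generateFrom {S | ∃ U : Set Y, IsOpen U ∧ S = oSet X U}

/-- The simple extension topology on `Y` (relative to the dense subset `X`),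
generated by the sets `{p} ∪ U` for `U ∈ O^p`. -/
def simpleTop (Y : Type u) [TopologicalSpace Y] (X : Set Y) : TopologicalSpace Y :=
  TopologicalSpace.generateFrom
    {S | ∃ (p : Y) (V : Set Y), IsOpen V ∧ p ∈ V ∧ S = insert p (V ∩ X)}

/-- `Z` is Hausdorff except for `X`: every point of `Z ∖ X` can be separated from every
other point of `Z` by disjoint open sets. -/
def HausdorffExceptFor (Z : Type u) [TopologicalSpace Z] (X : Set Z) : Prop :=
  ∀ p ∉ X, ∀ q : Z, q ≠ p →
    ∃ U V : Set Z, IsOpen U ∧ IsOpen V ∧ p ∈ U ∧ q ∈ V ∧ U ∩ V = ∅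

/-!
A point `q` added in `n-κX` cannot be sent into `X`: if `f q = e x`, the trace on `Z` of the
open ultrafilter of `q` is an open filter with fewer than `n - 1` adherent points (points of
`Z ∖ X` are separated from `e x`), and adjoining to `Z` one point whose neighbourhoods trace
this filter yields an `n`-Hausdorff space in which `Z` is not closed.

Disjoint open `U, V ⊆ Z` give disjoint open sets `oSet (f⁻¹ U)`, `oSet (f⁻¹ V)` of `n-σX`,
since `X` is dense; this yields closedness of the fibres and both separation properties. For
compactness, an ultrafilter on a fibre `f⁻¹ p` induces an open ultrafilter on `X` without
adherent points (`p` is separated from `X`); the added point it determines is a limit of the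
ultrafilter in `n-σX`, and lies in the fibre by the same separation argument.
-/

section OpenFilters

variable {X Z : Type u} [TopologicalSpace X] [TopologicalSpace Z]

lemma mem_adh_iff {F : Set (Set X)} {x : X} : x ∈ adh F ↔ ∀ U ∈ F, x ∈ closure U := by
  simp [adh]

lemma IsOpenUltrafilter.mem_or_compl_closure_mem {F : Set (Set X)} (hF : IsOpenUltrafilter F)
    {U : Set X} (hU : IsOpen U) : U ∈ F ∨ (closure U)ᶜ ∈ F := by
  by_cases h : ∀ V ∈ F, (V ∩ U).Nonempty
  · left
    -- `F` lies in the open filter generated by `F` and `U`, hence equals it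
    let G : Set (Set X) := {W | IsOpen W ∧ ∃ V ∈ F, V ∩ U ⊆ W}
    have hG : IsOpenFilter G :=
      { nonempty := ⟨U, hU, univ, univ_mem_of_isOpenFilter hF.1, inter_subset_right⟩
        isOpen_mem := fun W hW => hW.1
        nonempty_mem := fun W ⟨_, V, hV, hVW⟩ => (h V hV).mono hVW
        inter_mem := fun W₁ ⟨h₁, V₁, hV₁, hs₁⟩ W₂ ⟨h₂, V₂, hV₂, hs₂⟩ =>
          ⟨h₁.inter h₂, V₁ ∩ V₂, hF.1.inter_mem _ hV₁ _ hV₂,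
            fun x hx => ⟨hs₁ ⟨hx.1.1, hx.2⟩, hs₂ ⟨hx.1.2, hx.2⟩⟩⟩
        superset_mem := fun W ⟨_, V, hV, hs⟩ W' hW' hWW' => ⟨hW', V, hV, hs.trans hWW'⟩ }
    rw [← hF.2 G hG fun V hV => ⟨hF.1.isOpen_mem V hV, V, hV, inter_subset_left⟩]
    exact ⟨hU, univ, univ_mem_of_isOpenFilter hF.1, inter_subset_right⟩
  · right
    push Not at h
    obtain ⟨V, hV, hVU⟩ := h
    refine hF.1.superset_mem V hV _ isClosed_closure.isOpen_compl fun x hxV hxU => ?_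
    obtain ⟨y, hyV, hyU⟩ := mem_closure_iff.mp hxU V (hF.1.isOpen_mem V hV) hxV
    exact hVU.subset ⟨hyV, hyU⟩

lemma IsOpenFilter.isOpenUltrafilter {F : Set (Set X)} (hF : IsOpenFilter F)
    (h : ∀ U : Set X, IsOpen U → U ∈ F ∨ (closure U)ᶜ ∈ F) : IsOpenUltrafilter F := by
  refine ⟨hF, fun G hG hFG => (Subset.antisymm · hFG) fun U hUG => ?_⟩
  refine (h U (hG.isOpen_mem U hUG)).resolve_right fun hU => ?_
  obtain ⟨x, hxU, hxU'⟩ := hG.nonempty_mem _ (hG.inter_mem U hUG _ (hFG hU))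
  exact hxU' (subset_closure hxU)

def openFilterMap (e : X → Z) (G : Set (Set X)) : Set (Set Z) :=
  {U | IsOpen U ∧ e ⁻¹' U ∈ G}

lemma IsOpenFilter.openFilterMap {G : Set (Set X)} (hG : IsOpenFilter G) {e : X → Z}
    (he : Continuous e) : IsOpenFilter (openFilterMap e G) where
  nonempty := ⟨univ, isOpen_univ, univ_mem_of_isOpenFilter hG⟩
  isOpen_mem _ hU := hU.1
  nonempty_mem U hU := (hG.nonempty_mem _ hU.2).image e |>.mono (image_preimage_subset e U)
  inter_mem _ hU _ hV := ⟨hU.1.inter hV.1, hG.inter_mem _ hU.2 _ hV.2⟩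
  superset_mem _ hU _ hV hUV :=
    ⟨hV, hG.superset_mem _ hU.2 _ (hV.preimage he) (preimage_mono hUV)⟩

lemma mem_adh_of_mem_adh_openFilterMap {G : Set (Set X)} (hG : IsOpenFilter G) {e : X → Z}
    (he : IsEmbedding e) (hd : Dense (range e)) {x : X}
    (hx : e x ∈ adh (openFilterMap e G)) : x ∈ adh G := by
  refine mem_adh_iff.mpr fun W hW => ?_
  obtain ⟨V, hV, rfl⟩ := he.isOpen_iff.mp (hG.isOpen_mem W hW)
  rw [he.closure_eq_preimage_closure_image, image_preimage_eq_inter_range]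
  exact closure_minimal (hd.open_subset_closure_inter hV) isClosed_closure
    (mem_adh_iff.mp hx V ⟨hV, hW⟩)

def openFilterLimit {ι : Type v} (𝒱 : Ultrafilter ι) (F : ι → Set (Set X)) : Set (Set X) :=
  {U | IsOpen U ∧ {i | U ∈ F i} ∈ 𝒱}

lemma isOpenUltrafilter_openFilterLimit {ι : Type v} (𝒱 : Ultrafilter ι)
    {F : ι → Set (Set X)} (hF : ∀ i, IsOpenUltrafilter (F i)) :
    IsOpenUltrafilter (openFilterLimit 𝒱 F) := by
  refine IsOpenFilter.isOpenUltrafilter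
    { nonempty :=
        ⟨univ, isOpen_univ, Filter.univ_mem' fun i => univ_mem_of_isOpenFilter (hF i).1⟩
      isOpen_mem := fun U hU => hU.1
      nonempty_mem := fun U hU => by
        obtain ⟨i, hi⟩ := Filter.nonempty_of_mem hU.2
        exact (hF i).1.nonempty_mem U hi
      inter_mem := fun U hU V hV => ⟨hU.1.inter hV.1, Filter.mem_of_superset
        (Filter.inter_mem hU.2 hV.2) fun i hi => (hF i).1.inter_mem U hi.1 V hi.2⟩
      superset_mem := fun U hU V hV hUV => ⟨hV, Filter.mem_of_superset hU.2
        fun i hi => (hF i).1.superset_mem U hi V hV hUV⟩ } fun U hU => ?_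
  have hcover : {i | U ∈ F i} ∪ {i | (closure U)ᶜ ∈ F i} ∈ 𝒱 :=
    Filter.univ_mem' fun i => (hF i).mem_or_compl_closure_mem hU
  exact (Ultrafilter.union_mem_iff.mp hcover).imp (⟨hU, ·⟩)
    (⟨isClosed_closure.isOpen_compl, ·⟩)

end OpenFilters

lemma exists_isOpen_iInter_eq_empty_of_disjoint {W ι : Type*} [TopologicalSpace W]
    [DecidableEq ι] {y : ι → W} {i j : ι} (hij : i ≠ j) {A B : Set W} (hA : IsOpen A)
    (hB : IsOpen B) (hyi : y i ∈ A) (hyj : y j ∈ B) (hAB : Disjoint A B) :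
    ∃ U : ι → Set W, (∀ k, IsOpen (U k) ∧ y k ∈ U k) ∧ ⋂ k, U k = ∅ := by
  refine ⟨fun k => if k = i then A else if k = j then B else univ, fun k => ?_, ?_⟩
  · by_cases hki : k = i
    · subst hki; simpa using ⟨hA, hyi⟩
    by_cases hkj : k = j
    · subst hkj; simpa [hki] using ⟨hB, hyj⟩
    simp [hki, hkj]
  · refine eq_empty_of_subset_empty fun w hw => hAB.le_bot ⟨?_, ?_⟩
    · simpa using mem_iInter.mp hw i
    · simpa [hij.symm] using mem_iInter.mp hw j

section PointExtension

variable {Z : Type u} [TopologicalSpace Z]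

def extendByOpenFilter (H : Set (Set Z)) (hH : IsOpenFilter H) :
    TopologicalSpace (Option Z) where
  IsOpen W := IsOpen (some ⁻¹' W : Set Z) ∧ (none ∈ W → some ⁻¹' W ∈ H)
  isOpen_univ := ⟨isOpen_univ, fun _ => univ_mem_of_isOpenFilter hH⟩
  isOpen_inter s t hs ht :=
    ⟨hs.1.inter ht.1, fun hn => hH.inter_mem _ (hs.2 hn.1) _ (ht.2 hn.2)⟩
  isOpen_sUnion S hS := by
    have hop : IsOpen (some ⁻¹' ⋃₀ S : Set Z) := by
      rw [preimage_sUnion]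
      exact isOpen_biUnion fun s hs => (hS s hs).1
    refine ⟨hop, ?_⟩
    rintro ⟨s, hsS, hns⟩
    exact hH.superset_mem _ ((hS s hsS).2 hns) _ hop fun x hx => ⟨s, hsS, hx⟩

variable {H : Set (Set Z)} {hH : IsOpenFilter H}

lemma isOpen_extendByOpenFilter_iff {W : Set (Option Z)} :
    IsOpen[extendByOpenFilter H hH] W ↔
      IsOpen (some ⁻¹' W : Set Z) ∧ (none ∈ W → some ⁻¹' W ∈ H) :=
  Iff.rfl

lemma isOpenMap_some_extendByOpenFilter :
    @IsOpenMap Z (Option Z) _ (extendByOpenFilter H hH) some := fun U hU =>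
  ⟨by rwa [preimage_image_eq U (Option.some_injective Z)],
    fun ⟨_, _, h⟩ => absurd h (Option.some_ne_none _)⟩

lemma isOpen_insert_none_extendByOpenFilter {V : Set Z} (hV : V ∈ H) :
    IsOpen[extendByOpenFilter H hH] (insert none (some '' V)) := by
  have hpre : (some ⁻¹' insert none (some '' V) : Set Z) = V := by
    ext z
    simp
  rw [isOpen_extendByOpenFilter_iff, hpre]
  exact ⟨hH.isOpen_mem V hV, fun _ => hV⟩

lemma isEmbedding_some_extendByOpenFilter :
    @IsEmbedding Z (Option Z) _ (extendByOpenFilter H hH) some :=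
  letI := extendByOpenFilter H hH
  (IsOpenEmbedding.of_continuous_injective_isOpenMap
    (continuous_def.mpr fun _ (hW : IsOpen[extendByOpenFilter H hH] _) => hW.1)
    (Option.some_injective Z) isOpenMap_some_extendByOpenFilter).isEmbedding

end PointExtension

lemma nHausdorff_extendByOpenFilter {Z : Type u} [TopologicalSpace Z] {n : ℕ}
    (hZ : NHausdorff Z n) {H : Set (Set Z)} (hH : IsOpenFilter H)
    (hcard : (adh H).encard < (n - 1 : ℕ)) :
    @NHausdorff (Option Z) (extendByOpenFilter H hH) n := by
  let _ := extendByOpenFilter H hH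
  have hn : 0 < n - 1 := by exact_mod_cast pos_of_gt hcard
  intro y hy
  by_cases hnone : none ∈ range y
  · obtain ⟨i₀, hi₀⟩ := hnone
    -- the other `n - 1` points lie in `Z`, so they cannot all adhere to `H`
    obtain ⟨i₁, z, hi₁, hz⟩ : ∃ i z, y i = some z ∧ z ∉ adh H := by
      by_contra! h
      have hsub : range y ⊆ insert none (some '' adh H) := by
        rintro _ ⟨i, rfl⟩
        cases hyi : y i with
        | none => exact mem_insert _ _
        | some z => exact mem_insert_of_mem _ ⟨z, h i z hyi, rfl⟩
      have hle : (n : ℕ∞) ≤ ((n - 1 : ℕ) : ℕ∞) := calc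
        (n : ℕ∞) = ENat.card (Fin n) := by simp
        _ ≤ (range y).encard := hy.encard_range
        _ ≤ (insert none (some '' adh H)).encard := encard_le_encard hsub
        _ ≤ (some '' adh H).encard + 1 := encard_insert_le _ _
        _ = (adh H).encard + 1 := by rw [(Option.some_injective Z).encard_image]
        _ ≤ _ := Order.add_one_le_of_lt hcard
      norm_cast at hle
      omega
    obtain ⟨V, hVH, hzV⟩ : ∃ V ∈ H, z ∉ closure V := by simpa [mem_adh_iff] using hz
    refine exists_isOpen_iInter_eq_empty_of_disjoint (i := i₀) (j := i₁)
      (by rintro rfl; rw [hi₁] at hi₀; cases hi₀)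
      (isOpen_insert_none_extendByOpenFilter hVH)
      (isOpenMap_some_extendByOpenFilter _ isClosed_closure.isOpen_compl)
      (by rw [hi₀]; exact mem_insert _ _) (by rw [hi₁]; exact mem_image_of_mem _ hzV) ?_
    refine disjoint_insert_left.mpr ⟨by simp, ?_⟩
    exact (disjoint_image_iff (Option.some_injective Z)).mpr
      (disjoint_compl_right_iff_subset.mpr subset_closure)
  · obtain ⟨z, hz⟩ : ∃ z : Fin n → Z, ∀ i, y i = some (z i) :=
      ⟨fun i => (y i).get (Option.isSome_iff_ne_none.mpr fun h => hnone ⟨i, h⟩), by simp⟩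
    obtain ⟨U, hU, hInt⟩ := hZ z fun i j hij => hy (by rw [hz, hz, hij])
    have : Nonempty (Fin n) := ⟨⟨0, by omega⟩⟩
    refine ⟨fun i => some '' U i, fun i => ⟨isOpenMap_some_extendByOpenFilter _ (hU i).1,
      hz i ▸ mem_image_of_mem _ (hU i).2⟩, ?_⟩
    rw [← (Option.some_injective Z).injOn.image_iInter_eq, hInt, image_empty]

lemma NHClosed.le_encard_adh {Z : Type u} [TopologicalSpace Z] {n : ℕ} (hZ : NHClosed Z n)
    {H : Set (Set Z)} (hH : IsOpenFilter H) :
    ((n - 1 : ℕ) : ℕ∞) ≤ (adh H).encard := by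
  by_contra! hcard
  let _ := extendByOpenFilter H hH
  have hclosed := hZ.2 (Option Z) _ some (nHausdorff_extendByOpenFilter hZ.1 hH hcard)
    isEmbedding_some_extendByOpenFilter
  -- as `Z` is closed in the extension, the new point is isolated and `H` contains `∅`
  have hempty : some ⁻¹' (range some)ᶜ ∈ H := hclosed.isOpen_compl.2 (by simp)
  obtain ⟨z, hz⟩ := hH.nonempty_mem _ hempty
  simp at hz

section StrictExtension

variable {Y Z : Type u} [TopologicalSpace Y] [TopologicalSpace Z] {D : Set Y}

lemma isOpen_strictTop_oSet {U : Set Y} (hU : IsOpen U) : IsOpen[strictTop Y D] (oSet D U) :=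
  TopologicalSpace.GenerateOpen.basic _ ⟨U, hU, rfl⟩

lemma subset_oSet {U : Set Y} (hU : IsOpen U) : U ⊆ oSet D U := fun _ hz => ⟨U, hU, hz, rfl⟩

lemma Disjoint.oSet (hD : Dense D) {U V : Set Y} (hUV : Disjoint U V) :
    Disjoint (oSet D U) (oSet D V) := by
  refine Set.disjoint_left.mpr ?_
  rintro z ⟨U', hU', hzU', hU'D⟩ ⟨V', hV', hzV', hV'D⟩
  obtain ⟨x, hxUV, hxD⟩ := dense_iff_inter_open.mp hD _ (hU'.inter hV') ⟨z, hzU', hzV'⟩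
  have hxU : x ∈ U ∩ D := hU'D ▸ ⟨hxUV.1, hxD⟩
  have hxV : x ∈ V ∩ D := hV'D ▸ ⟨hxUV.2, hxD⟩
  exact Set.disjoint_left.mp hUV hxU.1 hxV.1

variable {A : Set Z} {g : Y → Z} {p : Z}

lemma HausdorffExceptFor.exists_strictTop_separation (hZ : HausdorffExceptFor Z A)
    (hD : Dense D) (hg : Continuous g) (hp : p ∉ A) {q : Z} (hqp : q ≠ p) :
    ∃ U V : Set Y, IsOpen[strictTop Y D] U ∧ IsOpen[strictTop Y D] V ∧
      g ⁻¹' {p} ⊆ U ∧ g ⁻¹' {q} ⊆ V ∧ U ∩ V = ∅ := by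
  obtain ⟨U, V, hU, hV, hpU, hqV, hUV⟩ := hZ p hp q hqp
  refine ⟨oSet D (g ⁻¹' U), oSet D (g ⁻¹' V), isOpen_strictTop_oSet (hU.preimage hg),
    isOpen_strictTop_oSet (hV.preimage hg), ?_, ?_, ?_⟩
  · exact (preimage_mono (singleton_subset_iff.mpr hpU)).trans (subset_oSet (hU.preimage hg))
  · exact (preimage_mono (singleton_subset_iff.mpr hqV)).trans (subset_oSet (hV.preimage hg))
  · exact disjoint_iff_inter_eq_empty.mp
      ((disjoint_iff_inter_eq_empty.mpr hUV).preimage g |>.oSet hD)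

lemma HausdorffExceptFor.isClosed_strictTop_preimage_singleton (hZ : HausdorffExceptFor Z A)
    (hD : Dense D) (hg : Continuous g) (hp : p ∉ A) : IsClosed[strictTop Y D] (g ⁻¹' {p}) := by
  rw [← @isOpen_compl_iff _ _ (strictTop Y D), @isOpen_iff_forall_mem_open _ (strictTop Y D)]
  intro z hz
  obtain ⟨U, V, -, hV, hpU, hzV, hUV⟩ := hZ.exists_strictTop_separation hD hg hp hz
  exact ⟨V, fun w hwV hw => hUV.subset ⟨hpU hw, hwV⟩, hV, hzV rfl⟩

lemma HausdorffExceptFor.notMem_adh (hZ : HausdorffExceptFor Z A) {z w : Z} (hz : z ∉ A)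
    (hwz : w ≠ z) {H : Set (Set Z)} (hH : ∀ V, IsOpen V → w ∈ V → V ∈ H) :
    z ∉ adh H := by
  intro hzH
  obtain ⟨U, V, hU, hV, hzU, hwV, hUV⟩ := hZ z hz w hwz
  obtain ⟨y, hyU, hyV⟩ := mem_closure_iff.mp (mem_adh_iff.mp hzH V (hH V hV hwV)) U hU hzU
  exact hUV.subset ⟨hyU, hyV⟩

end StrictExtension

attribute [local instance] nKatetovTop

section Katetov

variable {X : Type u} [TopologicalSpace X] {n : ℕ}

lemma dense_range_inl : Dense (range Sum.inl : Set (nKatetov X n)) := by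
  refine dense_iff_inter_open.mpr fun V hV ⟨z, hz⟩ => ?_
  cases z with
  | inl x => exact ⟨_, hz, x, rfl⟩
  | inr q =>
    obtain ⟨x, hx⟩ := q.1.2.1.1.nonempty_mem _ (hV.2 q hz)
    exact ⟨_, hx, x, rfl⟩

lemma inr_mem_oSet_iff {W : Set (nKatetov X n)} {q : KPoints X n} :
    Sum.inr q ∈ oSet (range Sum.inl : Set (nKatetov X n)) W ↔ Sum.inl ⁻¹' W ∈ q.1.val := by
  constructor
  · rintro ⟨V, hV, hqV, hVW⟩
    have htrace : Sum.inl ⁻¹' V = Sum.inl ⁻¹' W := by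
      ext x
      have hx := Set.ext_iff.mp hVW (Sum.inl x)
      exact ⟨fun h => (hx.mp ⟨h, x, rfl⟩).1, fun h => (hx.mpr ⟨h, x, rfl⟩).1⟩
    exact htrace ▸ hV.2 q hqV
  · intro hW
    let V : Set (nKatetov X n) := {z | Sum.elim (fun x => Sum.inl x ∈ W) (· = q) z}
    refine ⟨V, ⟨q.1.2.1.1.isOpen_mem _ hW, ?_⟩, rfl, ?_⟩
    · intro q' hq'
      rw [show q' = q from hq']
      exact hW
    · ext (x | q')
      · exact Iff.rfl
      · exact iff_of_false (fun ⟨_, _, h⟩ => Sum.inl_ne_inr h)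
          fun ⟨_, _, h⟩ => Sum.inl_ne_inr h

def traceLimit (𝒢 : Ultrafilter (nKatetov X n)) (h𝒢 : range Sum.inr ∈ 𝒢) : Set (Set X) :=
  openFilterLimit (𝒢.comap Sum.inr_injective h𝒢) fun q : KPoints X n => q.1.val

section TraceLimit

variable (𝒢 : Ultrafilter (nKatetov X n)) (h𝒢 : range Sum.inr ∈ 𝒢)

lemma inl_preimage_mem_traceLimit {W : Set (nKatetov X n)} (hW : IsOpen W) (hW𝒢 : W ∈ 𝒢) :
    Sum.inl ⁻¹' W ∈ traceLimit 𝒢 h𝒢 := by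
  refine ⟨hW.1, (Ultrafilter.mem_comap _ _ _).mpr
    (Filter.mem_of_superset (Filter.inter_mem hW𝒢 h𝒢) ?_)⟩
  rintro _ ⟨hw, q, rfl⟩
  exact ⟨q, hW.2 q hw, rfl⟩

lemma le_nhds_strictTop_inr {q : KPoints X n} (hq : q.1.val = traceLimit 𝒢 h𝒢) :
    (𝒢 : Filter (nKatetov X n)) ≤
      @nhds _ (strictTop _ (range Sum.inl : Set (nKatetov X n))) (Sum.inr q) := by
  refine (le_iInf₂ fun s ⟨hqs, W, _, hs⟩ => Filter.le_principal_iff.mpr ?_).trans_eq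
    TopologicalSpace.nhds_generateFrom.symm
  subst hs
  have hW : Sum.inl ⁻¹' W ∈ traceLimit 𝒢 h𝒢 := hq ▸ inr_mem_oSet_iff.mp hqs
  refine Filter.mem_of_superset ((Ultrafilter.mem_comap _ _ _).mp hW.2) ?_
  rintro _ ⟨q', hq', rfl⟩
  exact inr_mem_oSet_iff.mpr hq'

lemma exists_le_nhds_strictTop_inr (hcard : (adh (traceLimit 𝒢 h𝒢)).encard < (n - 1 : ℕ)) :
    ∃ q : KPoints X n,
      (𝒢 : Filter (nKatetov X n)) ≤
        @nhds _ (strictTop _ (range Sum.inl : Set (nKatetov X n))) (Sum.inr q) := by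
  have hfin : (adh (traceLimit 𝒢 h𝒢)).Finite :=
    encard_lt_top_iff.mp (hcard.trans (ENat.natCast_lt_top _))
  have hncard : (adh (traceLimit 𝒢 h𝒢)).ncard < n - 1 := by
    rw [← hfin.cast_ncard_eq] at hcard
    exact_mod_cast hcard
  let 𝒰 : NonFullUlt X n :=
    ⟨traceLimit 𝒢 h𝒢, isOpenUltrafilter_openFilterLimit _ fun q => q.1.2.1, hcard⟩
  exact ⟨⟨𝒰, ⟨0, Nat.sub_pos_of_lt hncard⟩⟩, le_nhds_strictTop_inr 𝒢 h𝒢 rfl⟩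

end TraceLimit

variable {Z : Type u} [TopologicalSpace Z] {e : X → Z} {f : nKatetov X n → Z}

lemma isCompact_strictTop_preimage_singleton (hn : 2 ≤ n) (he : Continuous e)
    (hZH : HausdorffExceptFor Z (range e)) (hf : Continuous f)
    (hfx : ∀ x : X, f (Sum.inl x) = e x) {p : Z} (hp : p ∉ range e) :
    @IsCompact _ (strictTop _ (range Sum.inl : Set (nKatetov X n))) (f ⁻¹' {p}) := by
  rw [@isCompact_iff_ultrafilter_le_nhds _ (strictTop _ _)]
  intro 𝒢 h𝒢
  have hp𝒢 : f ⁻¹' {p} ∈ 𝒢 := Filter.le_principal_iff.mp h𝒢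
  have h𝒢inr : range Sum.inr ∈ 𝒢 := by
    refine Filter.mem_of_superset hp𝒢 ?_
    rintro (x | q) hz
    · exact absurd ⟨x, (hfx x).symm.trans hz⟩ hp
    · exact ⟨q, rfl⟩
  have hadh : adh (traceLimit 𝒢 h𝒢inr) = ∅ := by
    refine eq_empty_of_forall_notMem fun x hx => ?_
    obtain ⟨U, V, hU, hV, hpU, hxV, hUV⟩ := hZH p hp (e x) fun h => hp ⟨x, h⟩
    have hU𝒢 : f ⁻¹' U ∈ 𝒢 :=
      Filter.mem_of_superset hp𝒢 (preimage_mono (singleton_subset_iff.mpr hpU))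
    have hxU :=
      mem_adh_iff.mp hx _ (inl_preimage_mem_traceLimit 𝒢 h𝒢inr (hU.preimage hf) hU𝒢)
    obtain ⟨y, hyV, hyU⟩ := mem_closure_iff.mp hxU _ (hV.preimage he) hxV
    exact hUV.subset ⟨(hfx y).symm ▸ hyU, hyV⟩
  obtain ⟨q, hq⟩ := exists_le_nhds_strictTop_inr 𝒢 h𝒢inr
    (by rw [hadh, encard_empty]; exact_mod_cast (by omega : 0 < n - 1))
  refine ⟨Sum.inr q, ?_, hq⟩
  by_contra hqp
  obtain ⟨U, V, -, hV, hpU, hqV, hUV⟩ :=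
    hZH.exists_strictTop_separation dense_range_inl hf hp hqp
  have hV𝒢 : V ∈ 𝒢 := hq (@IsOpen.mem_nhds _ (strictTop _ _) _ _ hV (hqV rfl))
  exact 𝒢.empty_notMem (hUV ▸ Filter.inter_mem (Filter.mem_of_superset hp𝒢 hpU) hV𝒢)

lemma apply_inr_notMem_range (hZ : NHClosed Z n) (he : IsEmbedding e) (hd : Dense (range e))
    (hZH : HausdorffExceptFor Z (range e)) (hf : Continuous f)
    (hfx : ∀ x : X, f (Sum.inl x) = e x) (q : KPoints X n) : f (Sum.inr q) ∉ range e := by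
  rintro ⟨x, hx⟩
  have hG := q.1.2.1.1
  have hnhds : ∀ V, IsOpen V → e x ∈ V → V ∈ openFilterMap e q.1.val := fun V hV hxV => by
    refine ⟨hV, ?_⟩
    have hqV := (hV.preimage hf).2 q (show f (Sum.inr q) ∈ V from hx ▸ hxV)
    have htrace : Sum.inl ⁻¹' (f ⁻¹' V) = e ⁻¹' V := by
      ext y
      exact iff_of_eq (congrArg (· ∈ V) (hfx y))
    exact htrace ▸ hqV
  have hadh : adh (openFilterMap e q.1.val) ⊆ e '' adh q.1.val := by
    intro z hz
    by_cases hzX : z ∈ range e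
    · obtain ⟨x', rfl⟩ := hzX
      exact ⟨x', mem_adh_of_mem_adh_openFilterMap hG he hd hz, rfl⟩
    · exact absurd hz (hZH.notMem_adh hzX (fun h => hzX ⟨x, h⟩) hnhds)
  have hle := hZ.le_encard_adh (hG.openFilterMap he.continuous)
  refine (hle.trans ((encard_le_encard hadh).trans (he.injective.encard_image _).le)).not_gt ?_
  exact q.1.2.2

end Katetov

theorem stmt19_general {X Z : Type u} [TopologicalSpace X] [TopologicalSpace Z]
    (n : ℕ) (hn : 2 ≤ n)
    (e : X → Z) (he : IsEmbedding e) (hd : Dense (Set.range e))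
    (hZ : NHClosed Z n) (hZH : HausdorffExceptFor Z (Set.range e))
    (f : nKatetov X n → Z) (hf : Continuous[nKatetovTop X n, _] f)
    (hfs : Function.Surjective f) (hfx : ∀ x : X, f (Sum.inl x) = e x) :
    let σ : TopologicalSpace (nKatetov X n) :=
      @strictTop (nKatetov X n) (nKatetovTop X n) (Set.range Sum.inl)
    -- each member of the partition is a nonempty compact subset of `n-σX ∖ X`,
    -- closed in `n-σX`
    (∀ p : Z, p ∉ Set.range e →
      IsClosed[σ] (f ⁻¹' {p}) ∧ @IsCompact _ σ (f ⁻¹' {p}) ∧ (f ⁻¹' {p}).Nonempty ∧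
        f ⁻¹' {p} ⊆ (Set.range (Sum.inl : X → nKatetov X n))ᶜ) ∧
    -- the members partition `n-σX ∖ X`
    ((Set.range (Sum.inl : X → nKatetov X n))ᶜ =
      ⋃ p ∈ (Set.range e)ᶜ, f ⁻¹' {p}) ∧
    -- the partition is Hausdorff
    (∀ p q : Z, p ∉ Set.range e → q ∉ Set.range e → p ≠ q →
      ∃ U V : Set (nKatetov X n), IsOpen[σ] U ∧ IsOpen[σ] V ∧
        f ⁻¹' {p} ⊆ U ∧ f ⁻¹' {q} ⊆ V ∧ U ∩ V = ∅) ∧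
    -- each member is Hausdorff-separated from every point of `X`
    (∀ p : Z, p ∉ Set.range e → ∀ x : X,
      ∃ U V : Set (nKatetov X n), IsOpen[σ] U ∧ IsOpen[σ] V ∧
        f ⁻¹' {p} ⊆ U ∧ Sum.inl x ∈ V ∧ U ∩ V = ∅) := by
  dsimp only
  have hpart : f ⁻¹' (range e)ᶜ = (range (Sum.inl : X → nKatetov X n))ᶜ := by
    rw [compl_range_inl]
    ext (x | q)
    · exact iff_of_false (fun h => h ⟨x, (hfx x).symm⟩) fun ⟨_, h⟩ => Sum.inr_ne_inl h
    · exact iff_of_true (apply_inr_notMem_range hZ he hd hZH hf hfx q) ⟨q, rfl⟩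
  refine ⟨fun p hp => ⟨hZH.isClosed_strictTop_preimage_singleton dense_range_inl hf hp,
    isCompact_strictTop_preimage_singleton hn he.continuous hZH hf hfx hp, hfs p,
    hpart ▸ preimage_mono (singleton_subset_iff.mpr hp)⟩,
    by rw [biUnion_preimage_singleton, hpart],
    fun p q hp _ hpq => hZH.exists_strictTop_separation dense_range_inl hf hp hpq.symm,
    fun p hp x => ?_⟩
  obtain ⟨U, V, hU, hV, hpU, hxV, hUV⟩ :=
    hZH.exists_strictTop_separation dense_range_inl hf hp (q := e x) fun h => hp ⟨x, h⟩
  exact ⟨U, V, hU, hV, hpU, hxV (hfx x), hUV⟩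

theorem stmt19 {X Z : Type u} [TopologicalSpace X] [TopologicalSpace Z]
    (n : ℕ) (hn : 2 ≤ n) (hX : NHausdorff X n)
    (e : X → Z) (he : IsEmbedding e) (hd : Dense (Set.range e))
    (hZ : NHClosed Z n) (hZH : HausdorffExceptFor Z (Set.range e))
    (f : nKatetov X n → Z) (hf : Continuous[nKatetovTop X n, _] f)
    (hfs : Function.Surjective f) (hfx : ∀ x : X, f (Sum.inl x) = e x) :
    let σ : TopologicalSpace (nKatetov X n) :=
      @strictTop (nKatetov X n) (nKatetovTop X n) (Set.range Sum.inl)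
    -- each member of the partition is a nonempty compact subset of `n-σX ∖ X`,
    -- closed in `n-σX`
    (∀ p : Z, p ∉ Set.range e →
      IsClosed[σ] (f ⁻¹' {p}) ∧ @IsCompact _ σ (f ⁻¹' {p}) ∧ (f ⁻¹' {p}).Nonempty ∧
        f ⁻¹' {p} ⊆ (Set.range (Sum.inl : X → nKatetov X n))ᶜ) ∧
    -- the members partition `n-σX ∖ X`
    ((Set.range (Sum.inl : X → nKatetov X n))ᶜ =
      ⋃ p ∈ (Set.range e)ᶜ, f ⁻¹' {p}) ∧
    -- the partition is Hausdorff
    (∀ p q : Z, p ∉ Set.range e → q ∉ Set.range e → p ≠ q →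
      ∃ U V : Set (nKatetov X n), IsOpen[σ] U ∧ IsOpen[σ] V ∧
        f ⁻¹' {p} ⊆ U ∧ f ⁻¹' {q} ⊆ V ∧ U ∩ V = ∅) ∧
    -- each member is Hausdorff-separated from every point of `X`
    (∀ p : Z, p ∉ Set.range e → ∀ x : X,
      ∃ U V : Set (nKatetov X n), IsOpen[σ] U ∧ IsOpen[σ] V ∧
        f ⁻¹' {p} ⊆ U ∧ Sum.inl x ∈ V ∧ U ∩ V = ∅) :=
  stmt19_general n hn e he hd hZ hZH f hf hfs hfx
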